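/- Let X be the disjoint union of fuzzy graphs X₁, …, X_t with n total vertices. Then SDI(X) = Σᵢ SDI(Xᵢ) + Σᵢ (n − |V(Xᵢ)|) · γ_s(Xᵢ), where γ_s(Xᵢ) is the strong domination number of component Xᵢ. -/

import Mathlib

open Finset

/-- A fuzzy graph on vertex type `V`. -/
structure FuzzyGraph (V : Type*) where
  ρ : V → ℝ
  υ : V → V → ℝ
  ρ_nonneg : ∀ a, 0 ≤ ρ a
  ρ_le_one : ∀ a, ρ a ≤ 1
  υ_nonneg : ∀ a b, 0 ≤ υ a b
  symm : ∀ a b, υ a b = υ b a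
  υ_le : ∀ a b, υ a b ≤ min (ρ a) (ρ b)
  loopless : ∀ a, υ a a = 0

namespace FuzzyGraph

variable {V : Type*} [Fintype V] [DecidableEq V]

/-- Strength of a path given by its list of successive vertices:
the minimum of the weights of its edges. -/
def pathStrength (X : FuzzyGraph V) : List V → ℝ
  | [] => 0
  | [_] => 0
  | [a, b] => X.υ a b
  | a :: b :: c :: l => min (X.υ a b) (X.pathStrength (b :: c :: l))

/-- `l` is a path from `a` to `b` : distinct vertices joined by positive-weight edges. -/
def IsPath (X : FuzzyGraph V) (a b : V) (l : List V) : Prop :=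
  l.Nodup ∧ l.head? = some a ∧ l.getLast? = some b ∧ 2 ≤ l.length ∧
    l.Chain' (fun x y => 0 < X.υ x y)

/-- Strength of connectedness between two vertices: maximum strength of a path. -/
noncomputable def conn (X : FuzzyGraph V) (a b : V) : ℝ :=
  sSup {s | ∃ l : List V, X.IsPath a b l ∧ s = X.pathStrength l}

/-- Delete the edge `ab` (set its weight to `0`). -/
def deleteEdge (X : FuzzyGraph V) (a b : V) : FuzzyGraph V where
  ρ := X.ρ
  υ x y := if (x = a ∧ y = b) ∨ (x = b ∧ y = a) then 0 else X.υ x y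
  ρ_nonneg := X.ρ_nonneg
  ρ_le_one := X.ρ_le_one
  υ_nonneg := by
    intro x y; split_ifs
    · exact le_rfl
    · exact X.υ_nonneg x y
  symm := by
    intro x y; try dsimp only
    by_cases h : (x = a ∧ y = b) ∨ (x = b ∧ y = a)
    · rw [if_pos h, if_pos (by tauto)]
    · rw [if_neg h, if_neg (by tauto), X.symm]
  υ_le := by
    intro x y; split_ifs
    · exact le_min (X.ρ_nonneg x) (X.ρ_nonneg y)
    · exact X.υ_le x y
  loopless := by
    intro x; split_ifs
    · rfl
    · exact X.loopless x

/-- `ab` is a strong edge (α- or β-strong). -/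
def StrongEdge (X : FuzzyGraph V) (a b : V) : Prop :=
  0 < X.υ a b ∧ (X.deleteEdge a b).conn a b ≤ X.υ a b

/-- `ab` is an α-strong edge. -/
def AlphaStrong (X : FuzzyGraph V) (a b : V) : Prop :=
  0 < X.υ a b ∧ (X.deleteEdge a b).conn a b < X.υ a b

/-- `ab` is a β-strong edge. -/
def BetaStrong (X : FuzzyGraph V) (a b : V) : Prop :=
  0 < X.υ a b ∧ X.υ a b = (X.deleteEdge a b).conn a b

/-- `ab` is a δ-edge. -/
def DeltaEdge (X : FuzzyGraph V) (a b : V) : Prop :=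
  0 < X.υ a b ∧ X.υ a b < (X.deleteEdge a b).conn a b

/-- The minimum weight of a strong edge incident at `a`. -/
noncomputable def minInc (X : FuzzyGraph V) (a : V) : ℝ :=
  sInf {w | ∃ b, X.StrongEdge a b ∧ w = X.υ a b}

/-- The weight of a set of vertices. -/
noncomputable def weight (X : FuzzyGraph V) (S : Finset V) : ℝ :=
  ∑ a ∈ S, X.minInc a

/-- `D` is a strong dominating set. -/
def IsSDS (X : FuzzyGraph V) (D : Finset V) : Prop :=
  ∀ v, v ∉ D → ∃ a ∈ D, X.StrongEdge a v

/-- `D` is a minimal strong dominating set. -/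
def IsMinimalSDS (X : FuzzyGraph V) (D : Finset V) : Prop :=
  X.IsSDS D ∧ ∀ a ∈ D, ¬ X.IsSDS (D.erase a)

/-- `D` is a minimum (least weight) strong dominating set. -/
def IsMinimumSDS (X : FuzzyGraph V) (D : Finset V) : Prop :=
  X.IsSDS D ∧ ∀ D' : Finset V, X.IsSDS D' → X.weight D ≤ X.weight D'

/-- The strong domination degree of a vertex. -/
noncomputable def sd (X : FuzzyGraph V) (u : V) : ℝ :=
  sInf {w | ∃ D : Finset V, X.IsMinimalSDS D ∧ u ∈ D ∧ w = X.weight D}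

/-- The strong domination number. -/
noncomputable def gammaS (X : FuzzyGraph V) : ℝ :=
  sInf {w | ∃ D : Finset V, X.IsSDS D ∧ w = X.weight D}

/-- The upper strong domination number. -/
noncomputable def GammaS (X : FuzzyGraph V) : ℝ :=
  sSup {w | ∃ D : Finset V, X.IsMinimalSDS D ∧ w = X.weight D}

/-- The strong domination index. -/
noncomputable def SDI (X : FuzzyGraph V) : ℝ := ∑ u : V, X.sd u

/-- `X` is connected. -/
def Connected (X : FuzzyGraph V) : Prop := ∀ a b : V, a ≠ b → ∃ l, X.IsPath a b l

/-- `X` is a strong fuzzy graph: every edge is strong. -/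
def IsStrongFG (X : FuzzyGraph V) : Prop := ∀ a b, 0 < X.υ a b → X.StrongEdge a b

/-- Underlying (support) simple graph. -/
def support (X : FuzzyGraph V) : SimpleGraph V where
  Adj a b := 0 < X.υ a b
  symm := ⟨by intro a b h; rw [X.symm]; exact h⟩
  loopless := ⟨by intro a h; rw [X.loopless] at h; exact lt_irrefl 0 h⟩

/-- `X` is a fuzzy tree. -/
def IsFuzzyTree (X : FuzzyGraph V) : Prop :=
  ∃ F : FuzzyGraph V, F.ρ = X.ρ ∧ (∀ a b, F.υ a b = X.υ a b ∨ F.υ a b = 0) ∧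
    F.support.IsTree ∧ ∀ a b, 0 < X.υ a b → F.υ a b = 0 → X.υ a b < F.conn a b

/-- The size of a fuzzy graph: the sum of all edge weights. -/
noncomputable def size (X : FuzzyGraph V) : ℝ := (∑ a : V, ∑ b : V, X.υ a b) / 2

/-- The underlying graph of `X` is a cycle. -/
def IsCycleGraph (X : FuzzyGraph V) : Prop :=
  ∃ n : ℕ, 3 ≤ n ∧ ∃ f : ZMod n ≃ V,
    ∀ x y : V, 0 < X.υ x y ↔ ∃ i : ZMod n, (x = f i ∧ y = f (i + 1)) ∨ (x = f (i + 1) ∧ y = f i)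

/-- `X` is a fuzzy cycle: a cycle with at least two edges of minimum weight. -/
def IsFuzzyCycle (X : FuzzyGraph V) : Prop :=
  X.IsCycleGraph ∧ ∃ a b c d : V, 0 < X.υ a b ∧ 0 < X.υ c d ∧
    Sym2.mk (a, b) ≠ Sym2.mk (c, d) ∧ X.υ a b = X.υ c d ∧
    ∀ x y, 0 < X.υ x y → X.υ a b ≤ X.υ x y

/-- A set of pairwise fuzzy independent vertices. -/
def IsFuzzyIndep (X : FuzzyGraph V) (S : Finset V) : Prop :=
  ∀ a ∈ S, ∀ b ∈ S, a ≠ b → ¬ X.StrongEdge a b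

/-- The strong independent domination number. -/
noncomputable def iS (X : FuzzyGraph V) : ℝ :=
  sInf {w | ∃ D : Finset V, X.IsSDS D ∧ X.IsFuzzyIndep D ∧ w = X.weight D}

/-- The strong independence number. -/
noncomputable def betaS (X : FuzzyGraph V) : ℝ :=
  sSup {w | ∃ S : Finset V, X.IsFuzzyIndep S ∧ w = X.weight S}

/-- Closed strong neighborhood. -/
def closedNbhd (X : FuzzyGraph V) (a : V) : Set V := insert a {b | X.StrongEdge a b}

/-- Open strong neighborhood. -/
def openNbhd (X : FuzzyGraph V) (a : V) : Set V := {b | X.StrongEdge a b}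

/-- Private neighborhood of `a` with respect to `S`. -/
def privNbhd (X : FuzzyGraph V) (a : V) (S : Finset V) : Set V :=
  X.closedNbhd a \ ⋃ b ∈ S.erase a, X.closedNbhd b

/-- `S` is a fuzzy irredundant set. -/
def IsIrredundant (X : FuzzyGraph V) (S : Finset V) : Prop :=
  ∀ a ∈ S, (X.privNbhd a S).Nonempty

/-- `S` is a maximal fuzzy irredundant set. -/
def IsMaximalIrredundant (X : FuzzyGraph V) (S : Finset V) : Prop :=
  X.IsIrredundant S ∧ ∀ v ∉ S, ¬ X.IsIrredundant (insert v S)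

/-- The strong irredundance number. -/
noncomputable def irS (X : FuzzyGraph V) : ℝ :=
  sInf {w | ∃ S : Finset V, X.IsMaximalIrredundant S ∧ w = X.weight S}

end FuzzyGraph
namespace FuzzyGraph

/-- The join of two fuzzy graphs on disjoint vertex sets. -/
def join {V₁ V₂ : Type*} (X₁ : FuzzyGraph V₁) (X₂ : FuzzyGraph V₂) :
    FuzzyGraph (V₁ ⊕ V₂) where
  ρ := Sum.elim X₁.ρ X₂.ρ
  υ a b := match a, b with
    | Sum.inl x, Sum.inl y => X₁.υ x y
    | Sum.inr x, Sum.inr y => X₂.υ x y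
    | Sum.inl x, Sum.inr y => min (X₁.ρ x) (X₂.ρ y)
    | Sum.inr x, Sum.inl y => min (X₂.ρ x) (X₁.ρ y)
  ρ_nonneg := by rintro (x | x) <;> simp [X₁.ρ_nonneg, X₂.ρ_nonneg]
  ρ_le_one := by rintro (x | x) <;> simp [X₁.ρ_le_one, X₂.ρ_le_one]
  υ_nonneg := by
    rintro (x | x) (y | y) <;> dsimp only
    · exact X₁.υ_nonneg x y
    · exact le_min (X₁.ρ_nonneg x) (X₂.ρ_nonneg y)
    · exact le_min (X₂.ρ_nonneg x) (X₁.ρ_nonneg y)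
    · exact X₂.υ_nonneg x y
  symm := by
    rintro (x | x) (y | y) <;> dsimp only
    · exact X₁.symm x y
    · exact min_comm _ _
    · exact min_comm _ _
    · exact X₂.symm x y
  υ_le := by
    rintro (x | x) (y | y) <;> dsimp only
    · exact X₁.υ_le x y
    · exact le_rfl
    · exact le_rfl
    · exact X₂.υ_le x y
  loopless := by
    rintro (x | x) <;> dsimp only
    · exact X₁.loopless x
    · exact X₂.loopless x

/-- The disjoint union of a family of fuzzy graphs. -/
def sigmaUnion {ι : Type*} [DecidableEq ι] {V : ι → Type*}
    (X : ∀ i, FuzzyGraph (V i)) : FuzzyGraph (Σ i, V i) where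
  ρ := fun a => (X a.1).ρ a.2
  υ := fun a b =>
    if h : a.1 = b.1 then (X b.1).υ (h ▸ a.2) b.2 else 0
  ρ_nonneg := fun a => (X a.1).ρ_nonneg a.2
  ρ_le_one := fun a => (X a.1).ρ_le_one a.2
  υ_nonneg := by
    rintro ⟨i, x⟩ ⟨j, y⟩; dsimp only
    split_ifs with h
    · exact (X j).υ_nonneg _ _
    · exact le_rfl
  symm := by
    rintro ⟨i, x⟩ ⟨j, y⟩; dsimp only
    by_cases h : i = j
    · subst h; simp [(X i).symm]
    · rw [dif_neg h, dif_neg (Ne.symm h)]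
  υ_le := by
    rintro ⟨i, x⟩ ⟨j, y⟩; dsimp only
    by_cases h : i = j
    · subst h; simpa using (X i).υ_le x y
    · rw [dif_neg h]
      exact le_min ((X i).ρ_nonneg x) ((X j).ρ_nonneg y)
  loopless := by
    rintro ⟨i, x⟩; dsimp only
    rw [dif_pos rfl]
    exact (X i).loopless x

end FuzzyGraph

/-!
Strong edges never join different components, and the strength of connectedness between two
vertices of one component only involves paths inside that component. Hence a set of vertices
of the disjoint union is a (minimal) strong dominating set exactly when each of its slices is
one, and its weight is the sum of the weights of the slices. The cheapest minimal SDS through a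
vertex `u` of `Xₖ` is therefore the cheapest one of `Xₖ` through `u`, together with a minimum
SDS of every other component; summing over all vertices gives the formula.
-/

namespace FuzzyGraph

section Paths

variable {V : Type*} (X : FuzzyGraph V)

@[ext]
theorem ext {X Y : FuzzyGraph V} (hρ : X.ρ = Y.ρ) (hυ : X.υ = Y.υ) : X = Y := by
  cases X; cases Y; cases hρ; cases hυ; rfl

theorem pathStrength_cons_cons (a b : V) {l : List V} (hl : l ≠ []) :
    X.pathStrength (a :: b :: l) = min (X.υ a b) (X.pathStrength (b :: l)) := by
  obtain ⟨c, l, rfl⟩ := List.exists_cons_of_ne_nil hl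
  rfl

theorem pathStrength_append_pair (y z : V) :
    ∀ {l : List V}, l ≠ [] →
      X.pathStrength (l ++ [y, z]) = min (X.pathStrength (l ++ [y])) (X.υ y z)
  | [c], _ => rfl
  | c :: d :: l, _ => by
    have ih := pathStrength_append_pair y z (l := d :: l) (List.cons_ne_nil d l)
    simp only [List.cons_append] at ih ⊢
    rw [X.pathStrength_cons_cons c d (by simp), X.pathStrength_cons_cons c d (by simp), ih,
      min_assoc]

theorem pathStrength_reverse : ∀ l : List V, X.pathStrength l.reverse = X.pathStrength l
  | [] => rfl
  | [_] => rfl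
  | [a, b] => X.symm b a
  | a :: b :: c :: l => by
    have hrev : (a :: b :: c :: l).reverse = (c :: l).reverse ++ [b, a] := by simp
    rw [hrev, X.pathStrength_append_pair b a (by simp), ← List.reverse_cons,
      pathStrength_reverse (b :: c :: l), X.pathStrength_cons_cons a b (by simp), X.symm b a,
      min_comm]

theorem IsPath.reverse {X : FuzzyGraph V} {a b : V} {l : List V} (h : X.IsPath a b l) :
    X.IsPath b a l.reverse := by
  obtain ⟨hnd, hhead, hlast, hlen, hchain⟩ := h
  refine ⟨List.nodup_reverse.2 hnd, by rwa [List.head?_reverse], by rwa [List.getLast?_reverse],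
    by rwa [List.length_reverse], ?_⟩
  exact List.isChain_reverse.2 (hchain.imp fun x y hxy => by rwa [X.symm])

theorem conn_comm (a b : V) : X.conn a b = X.conn b a := by
  have key : ∀ a b, {s | ∃ l, X.IsPath a b l ∧ s = X.pathStrength l} ⊆
      {s | ∃ l, X.IsPath b a l ∧ s = X.pathStrength l} := fun a b _ ⟨l, hl, hs⟩ =>
    ⟨l.reverse, hl.reverse, hs.trans (X.pathStrength_reverse l).symm⟩
  exact congrArg sSup ((key a b).antisymm (key b a))

variable {W : Type*} {Y : FuzzyGraph W} {f : V → W}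

theorem pathStrength_map (hf : ∀ x y, Y.υ (f x) (f y) = X.υ x y) :
    ∀ l : List V, Y.pathStrength (l.map f) = X.pathStrength l
  | [] => rfl
  | [_] => rfl
  | [x, y] => hf x y
  | x :: y :: z :: l => by
    rw [List.map_cons, List.map_cons, Y.pathStrength_cons_cons _ _ (by simp),
      X.pathStrength_cons_cons _ _ (by simp), hf, ← List.map_cons,
      pathStrength_map hf (y :: z :: l)]

theorem isPath_map_iff (hinj : f.Injective) (hf : ∀ x y, Y.υ (f x) (f y) = X.υ x y)
    {a b : V} {l : List V} : Y.IsPath (f a) (f b) (l.map f) ↔ X.IsPath a b l := by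
  have hsome : ∀ (o : Option V) (c : V), o.map f = some (f c) ↔ o = some c := fun o c =>
    (Option.map_injective hinj).eq_iff' rfl
  simp only [IsPath, List.nodup_map_iff hinj, List.head?_map, List.getLast?_map, hsome,
    List.length_map, List.Chain', List.isChain_map, hf]

end Paths

section Domination

variable {V : Type*} [DecidableEq V] (X : FuzzyGraph V)

theorem deleteEdge_comm (a b : V) : X.deleteEdge a b = X.deleteEdge b a := by
  ext x y
  · rfl
  · simp only [deleteEdge, or_comm]

theorem StrongEdge.symm {X : FuzzyGraph V} {a b : V} (h : X.StrongEdge a b) :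
    X.StrongEdge b a := by
  rw [StrongEdge, X.symm, X.deleteEdge_comm, conn_comm]
  exact h

theorem minInc_nonneg (a : V) : 0 ≤ X.minInc a :=
  Real.sInf_nonneg fun _ ⟨b, _, hw⟩ => hw ▸ X.υ_nonneg a b

theorem weight_nonneg (D : Finset V) : 0 ≤ X.weight D :=
  Finset.sum_nonneg fun a _ => X.minInc_nonneg a

theorem weight_mono {D E : Finset V} (h : D ⊆ E) : X.weight D ≤ X.weight E :=
  Finset.sum_le_sum_of_subset_of_nonneg h fun a _ _ => X.minInc_nonneg a

theorem gammaS_le_weight {D : Finset V} (hD : X.IsSDS D) : X.gammaS ≤ X.weight D :=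
  csInf_le ⟨0, fun _ ⟨E, _, hw⟩ => hw ▸ X.weight_nonneg E⟩ ⟨D, hD, rfl⟩

theorem sd_le_weight {D : Finset V} (hD : X.IsMinimalSDS D) {u : V} (hu : u ∈ D) :
    X.sd u ≤ X.weight D :=
  csInf_le ⟨0, fun _ ⟨E, _, _, hw⟩ => hw ▸ X.weight_nonneg E⟩ ⟨D, hD, hu, rfl⟩

theorem isMinimalSDS_of_minimal {D : Finset V} (hD : Minimal X.IsSDS D) : X.IsMinimalSDS D :=
  ⟨hD.prop, fun a ha hsds =>
    (Finset.erase_ssubset ha).not_subset (hD.le_of_le hsds (D.erase_subset a))⟩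

theorem isMinimalSDS_of_maximal {I : Finset V} (hI : Maximal X.IsFuzzyIndep I) :
    X.IsMinimalSDS I := by
  refine ⟨fun v hv => ?_, fun a ha hsds => ?_⟩
  · by_contra! hundom
    refine hv (hI.le_of_ge (fun a ha b hb hab hab' => ?_) (I.subset_insert v) (I.mem_insert_self v))
    rcases Finset.mem_insert.1 ha with rfl | haI <;> rcases Finset.mem_insert.1 hb with rfl | hbI
    · exact hab rfl
    · exact hundom b hbI hab'.symm
    · exact hundom a haI hab'
    · exact hI.prop a haI b hbI hab hab'
  · obtain ⟨b, hb, hba⟩ := hsds a (I.notMem_erase a)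
    exact hI.prop b (Finset.mem_of_mem_erase hb) a ha (Finset.ne_of_mem_erase hb) hba

section Finite

variable [Fintype V]

theorem isSDS_univ : X.IsSDS Finset.univ := fun v hv => absurd (Finset.mem_univ v) hv

theorem exists_isMinimalSDS_subset {D : Finset V} (hD : X.IsSDS D) :
    ∃ D' ⊆ D, X.IsMinimalSDS D' :=
  let ⟨D', hsub, hmin⟩ := Finite.exists_le_minimal hD
  ⟨D', hsub, X.isMinimalSDS_of_minimal hmin⟩

theorem exists_isMinimalSDS_mem (u : V) : ∃ D, X.IsMinimalSDS D ∧ u ∈ D := by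
  have hu : X.IsFuzzyIndep {u} := fun a ha b hb hab => by
    rw [Finset.mem_singleton] at ha hb
    exact absurd (ha.trans hb.symm) hab
  obtain ⟨I, hsub, hmax⟩ := Finite.exists_le_maximal hu
  exact ⟨I, X.isMinimalSDS_of_maximal hmax, Finset.singleton_subset_iff.1 hsub⟩

theorem exists_isMinimalSDS_weight_eq_gammaS : ∃ D, X.IsMinimalSDS D ∧ X.weight D = X.gammaS := by
  have hmem : X.gammaS ∈ {w | ∃ D : Finset V, X.IsSDS D ∧ w = X.weight D} :=
    Set.Nonempty.csInf_mem ⟨_, Finset.univ, X.isSDS_univ, rfl⟩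
      ((Set.finite_range X.weight).subset fun _ ⟨D, _, hw⟩ => ⟨D, hw.symm⟩)
  obtain ⟨D₀, hD₀, hw₀⟩ := hmem
  obtain ⟨D, hsub, hD⟩ := X.exists_isMinimalSDS_subset hD₀
  exact ⟨D, hD, le_antisymm (hw₀ ▸ X.weight_mono hsub) (X.gammaS_le_weight hD.1)⟩

theorem exists_isMinimalSDS_mem_weight_eq_sd (u : V) :
    ∃ D, X.IsMinimalSDS D ∧ u ∈ D ∧ X.weight D = X.sd u := by
  obtain ⟨D₀, hD₀, hu⟩ := X.exists_isMinimalSDS_mem u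
  have hmem : X.sd u ∈ {w | ∃ D : Finset V, X.IsMinimalSDS D ∧ u ∈ D ∧ w = X.weight D} :=
    Set.Nonempty.csInf_mem ⟨_, D₀, hD₀, hu, rfl⟩
      ((Set.finite_range X.weight).subset fun _ ⟨D, _, _, hw⟩ => ⟨D, hw.symm⟩)
  obtain ⟨D, hD, huD, hw⟩ := hmem
  exact ⟨D, hD, huD, hw.symm⟩

end Finite

end Domination

section SigmaUnion

variable {ι : Type*} [DecidableEq ι] {V : ι → Type*} (X : ∀ i, FuzzyGraph (V i))

theorem sigmaUnion_υ_mk_mk {k : ι} (x y : V k) :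
    (sigmaUnion X).υ ⟨k, x⟩ ⟨k, y⟩ = (X k).υ x y := by
  simp [sigmaUnion]

theorem fst_eq_of_sigmaUnion_υ_pos {a b : Σ i, V i} (h : 0 < (sigmaUnion X).υ a b) :
    a.1 = b.1 := by
  by_contra hne
  simp [sigmaUnion, hne] at h

theorem exists_map_sigmaMk_eq_of_isChain {k : ι} :
    ∀ {l : List (Σ i, V i)}, l.IsChain (fun a b => 0 < (sigmaUnion X).υ a b) →
      (∀ a ∈ l.head?, a.1 = k) → ∃ l' : List (V k), l'.map (Sigma.mk k) = l
  | [], _, _ => ⟨[], rfl⟩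
  | ⟨i, x⟩ :: t, hchain, hhead => by
    obtain rfl : i = k := hhead _ rfl
    have htail : ∀ b ∈ t.head?, b.1 = i := by
      intro b hb
      cases t with
      | nil => cases hb
      | cons c t =>
        obtain rfl : c = b := Option.some_injective _ hb
        exact (fst_eq_of_sigmaUnion_υ_pos X (List.isChain_cons_cons.1 hchain).1).symm
    obtain ⟨t', rfl⟩ := exists_map_sigmaMk_eq_of_isChain hchain.tail htail
    exact ⟨x :: t', rfl⟩

theorem conn_sigmaUnion {k : ι} (a b : V k) :
    (sigmaUnion X).conn ⟨k, a⟩ ⟨k, b⟩ = (X k).conn a b := by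
  have hυ := sigmaUnion_υ_mk_mk X (k := k)
  unfold conn
  congr 1
  ext s
  constructor
  · rintro ⟨l, hl, rfl⟩
    obtain ⟨l', rfl⟩ := exists_map_sigmaMk_eq_of_isChain X (k := k) hl.2.2.2.2 (by simp [hl.2.1])
    exact ⟨l', (isPath_map_iff _ sigma_mk_injective hυ).1 hl, pathStrength_map _ hυ l'⟩
  · rintro ⟨l, hl, rfl⟩
    exact ⟨l.map (Sigma.mk k), (isPath_map_iff _ sigma_mk_injective hυ).2 hl,
      (pathStrength_map _ hυ l).symm⟩

variable [∀ i, DecidableEq (V i)]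

theorem sigmaUnion_deleteEdge {k : ι} (x y : V k) :
    (sigmaUnion X).deleteEdge ⟨k, x⟩ ⟨k, y⟩ =
      sigmaUnion (Function.update X k ((X k).deleteEdge x y)) := by
  ext ⟨i, p⟩ ⟨j, q⟩
  · obtain rfl | hik := eq_or_ne i k <;> simp_all [sigmaUnion, deleteEdge]
  · obtain rfl | hij := eq_or_ne i j
    · obtain rfl | hik := eq_or_ne i k <;> simp_all [sigmaUnion, deleteEdge]
    · simp [sigmaUnion, deleteEdge, hij]

theorem strongEdge_sigmaUnion_mk_mk_iff {k : ι} (x y : V k) :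
    (sigmaUnion X).StrongEdge ⟨k, x⟩ ⟨k, y⟩ ↔ (X k).StrongEdge x y := by
  rw [StrongEdge, sigmaUnion_deleteEdge, conn_sigmaUnion, Function.update_self,
    sigmaUnion_υ_mk_mk, StrongEdge]

theorem StrongEdge.fst_eq_of_sigmaUnion {a b : Σ i, V i} (h : (sigmaUnion X).StrongEdge a b) :
    a.1 = b.1 :=
  fst_eq_of_sigmaUnion_υ_pos X h.1

theorem minInc_sigmaUnion {k : ι} (u : V k) :
    (sigmaUnion X).minInc ⟨k, u⟩ = (X k).minInc u := by
  unfold minInc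
  congr 1
  ext w
  constructor
  · rintro ⟨⟨j, y⟩, hy, rfl⟩
    obtain rfl : k = j := StrongEdge.fst_eq_of_sigmaUnion X hy
    exact ⟨y, (strongEdge_sigmaUnion_mk_mk_iff X u y).1 hy, sigmaUnion_υ_mk_mk X u y⟩
  · rintro ⟨y, hy, rfl⟩
    exact ⟨⟨k, y⟩, (strongEdge_sigmaUnion_mk_mk_iff X u y).2 hy, (sigmaUnion_υ_mk_mk X u y).symm⟩

end SigmaUnion

section Slice

variable {ι : Type*} {V : ι → Type*}

noncomputable def slice (D : Finset (Σ i, V i)) (i : ι) : Finset (V i) :=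
  D.preimage (Sigma.mk i) sigma_mk_injective.injOn

@[simp]
theorem mem_slice {D : Finset (Σ i, V i)} {i : ι} {v : V i} : v ∈ slice D i ↔ ⟨i, v⟩ ∈ D :=
  Finset.mem_preimage

theorem univ_sigma_slice [Fintype ι] (D : Finset (Σ i, V i)) :
    Finset.univ.sigma (slice D) = D := by
  ext ⟨i, v⟩
  simp

theorem slice_univ_sigma [Fintype ι] (E : ∀ i, Finset (V i)) (i : ι) :
    slice (Finset.univ.sigma E) i = E i := by
  ext v
  simp

variable [DecidableEq ι] [∀ i, DecidableEq (V i)]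

theorem slice_erase_self (D : Finset (Σ i, V i)) (i : ι) (a : V i) :
    slice (D.erase ⟨i, a⟩) i = (slice D i).erase a := by
  ext v
  simp

theorem slice_erase_of_ne (D : Finset (Σ i, V i)) {i j : ι} (h : i ≠ j) (a : V i) :
    slice (D.erase ⟨i, a⟩) j = slice D j := by
  ext v
  simp [Ne.symm h]

end Slice

section SigmaUnionDomination

variable {ι : Type*} [DecidableEq ι] {V : ι → Type*} [∀ i, DecidableEq (V i)]
  (X : ∀ i, FuzzyGraph (V i))

theorem weight_sigmaUnion [Fintype ι] (D : Finset (Σ i, V i)) :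
    (sigmaUnion X).weight D = ∑ i, (X i).weight (slice D i) := by
  conv_lhs => rw [weight, ← univ_sigma_slice D, Finset.sum_sigma]
  simp only [minInc_sigmaUnion, weight]

theorem isSDS_sigmaUnion_iff (D : Finset (Σ i, V i)) :
    (sigmaUnion X).IsSDS D ↔ ∀ i, (X i).IsSDS (slice D i) := by
  constructor
  · intro hD i v hv
    obtain ⟨⟨j, a⟩, ha, hav⟩ := hD ⟨i, v⟩ (mt mem_slice.2 hv)
    obtain rfl : j = i := StrongEdge.fst_eq_of_sigmaUnion X hav
    exact ⟨a, mem_slice.2 ha, (strongEdge_sigmaUnion_mk_mk_iff X a v).1 hav⟩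
  · rintro hD ⟨i, v⟩ hv
    obtain ⟨a, ha, hav⟩ := hD i v (mt mem_slice.1 hv)
    exact ⟨⟨i, a⟩, mem_slice.1 ha, (strongEdge_sigmaUnion_mk_mk_iff X a v).2 hav⟩

theorem isMinimalSDS_sigmaUnion_iff (D : Finset (Σ i, V i)) :
    (sigmaUnion X).IsMinimalSDS D ↔ ∀ i, (X i).IsMinimalSDS (slice D i) := by
  simp only [IsMinimalSDS, isSDS_sigmaUnion_iff]
  constructor
  · rintro ⟨hD, hmin⟩ i
    refine ⟨hD i, fun a ha hsds => hmin ⟨i, a⟩ (mem_slice.1 ha) fun j => ?_⟩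
    obtain rfl | hij := eq_or_ne i j
    · rwa [slice_erase_self]
    · rw [slice_erase_of_ne D hij]
      exact hD j
  · intro hD
    refine ⟨fun i => (hD i).1, fun ⟨i, a⟩ ha hsds => (hD i).2 a (mem_slice.2 ha) ?_⟩
    rw [← slice_erase_self]
    exact hsds i

variable [Fintype ι] [∀ i, Fintype (V i)]

theorem sd_sigmaUnion {k : ι} (u : V k) :
    (sigmaUnion X).sd ⟨k, u⟩ = (X k).sd u + ∑ i ∈ Finset.univ.erase k, (X i).gammaS := by
  apply le_antisymm
  · obtain ⟨E, hE, huE, hwE⟩ := (X k).exists_isMinimalSDS_mem_weight_eq_sd u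
    choose G hG hwG using fun i => (X i).exists_isMinimalSDS_weight_eq_gammaS
    set F := Function.update G k E
    have hF : ∀ i, (X i).IsMinimalSDS (F i) :=
      (Function.forall_update_iff G fun i D => (X i).IsMinimalSDS D).2 ⟨hE, fun i _ => hG i⟩
    have hmin : (sigmaUnion X).IsMinimalSDS (Finset.univ.sigma F) := by
      simpa only [isMinimalSDS_sigmaUnion_iff, slice_univ_sigma] using hF
    have hu : ⟨k, u⟩ ∈ Finset.univ.sigma F := by simp [F, huE]
    calc (sigmaUnion X).sd ⟨k, u⟩
        ≤ (sigmaUnion X).weight (Finset.univ.sigma F) := (sigmaUnion X).sd_le_weight hmin hu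
      _ = (X k).weight E + ∑ i ∈ Finset.univ.erase k, (X i).weight (G i) := by
        rw [weight_sigmaUnion, ← Finset.add_sum_erase _ _ (Finset.mem_univ k)]
        simp only [slice_univ_sigma, F, Function.update_self]
        congr 1
        exact Finset.sum_congr rfl fun i hi => by
          rw [Function.update_of_ne (Finset.ne_of_mem_erase hi)]
      _ = _ := by simp only [hwE, hwG]
  · obtain ⟨D, hD, hu, hw⟩ := (sigmaUnion X).exists_isMinimalSDS_mem_weight_eq_sd ⟨k, u⟩
    rw [isMinimalSDS_sigmaUnion_iff] at hD
    rw [← hw, weight_sigmaUnion, ← Finset.add_sum_erase _ _ (Finset.mem_univ k)]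
    gcongr with i
    · exact (X k).sd_le_weight (hD k) (mem_slice.2 hu)
    · exact (X i).gammaS_le_weight (hD i).1

end SigmaUnionDomination

end FuzzyGraph

/-- SDI of a disjoint union. -/
theorem FuzzyGraph.SDI_sigmaUnion {ι : Type*} [Fintype ι] [DecidableEq ι]
    {V : ι → Type*} [∀ i, Fintype (V i)] [∀ i, DecidableEq (V i)]
    (X : ∀ i, FuzzyGraph (V i)) :
    (FuzzyGraph.sigmaUnion X).SDI =
      (∑ i : ι, (X i).SDI) +
        ∑ i : ι, ((Fintype.card (Σ j, V j) : ℝ) - (Fintype.card (V i) : ℝ)) * (X i).gammaS := by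
  simp only [FuzzyGraph.SDI, Fintype.sum_sigma, FuzzyGraph.sd_sigmaUnion,
    Finset.sum_erase_eq_sub (Finset.mem_univ _), Finset.sum_add_distrib, Finset.sum_const,
    Finset.card_univ, nsmul_eq_mul]
  simp only [Fintype.card_sigma, Nat.cast_sum, mul_sub, sub_mul, Finset.sum_sub_distrib,
    ← Finset.sum_mul, ← Finset.mul_sum]
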